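/- Let β ∈ (0,1) be a real number, K ≥ 1 an integer, a > 0 a real number, and for integers n > K define g(n,β) = Σ_{i=n−K+1}^{n} β^{2(i−1)} + Σ_{i=1}^{n−K} β^{2(i−1)+4K⌊(n−i)/K⌋}. Then lim_{n→∞} [K/(2(n+K−1))]·log₂(1 + a·(n+K−1)/g(n,β)) = −K·log₂ β. -/

import Mathlib

/-!
Up to factors depending only on `β` and `K`, `g(n, β)` is `β ^ (2n)`: its term `i = n` gives
`β ^ (2(n-1)) ≤ g(n, β)`, the first sum is at most `K β ^ (2(n-K))`, and since
`K ⌊(n-i)/K⌋ > n - i - K` the second sum is dominated by a geometric series of ratio `β²` starting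
at `β ^ (2(n-K))`. Hence `log (1 + a (n+K-1) / g(n, β)) = -2n log β + O(log n)`.
-/

open Filter Topology Real Finset

theorem tendsto_log_add_mul_div_atTop (c : ℝ) {a : ℝ} (ha : 0 < a) :
    Tendsto (fun x => log (c + a * x) / x) atTop (𝓝 0) := by
  have hlin : Tendsto (fun x => c + a * x) atTop atTop :=
    tendsto_atTop_add_const_left _ _ (tendsto_id.const_mul_atTop ha)
  refine ((tendsto_pow_log_div_mul_add_atTop a⁻¹ (-(c / a)) 1 (inv_ne_zero ha.ne')).comp
    hlin).congr fun x => ?_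
  have : a⁻¹ * (c + a * x) + -(c / a) = x := by field_simp; ring
  simp only [Function.comp_apply, pow_one, this]

theorem tendsto_log_one_add_div_geometric {r a c : ℝ} (b : ℝ) (hr₀ : 0 < r) (hr₁ : r ≤ 1)
    (ha : 0 < a) (hc : 0 < c) :
    Tendsto (fun n : ℕ => log (1 + a * (n + b) / (c * r ^ n)) / (n + b)) atTop
      (𝓝 (-log r)) := by
  have hm : Tendsto (fun n : ℕ => (n : ℝ) + b) atTop atTop :=
    tendsto_atTop_add_const_right _ b tendsto_natCast_atTop_atTop
  have hnum : Tendsto (fun n : ℕ => log (c * r ^ n + a * (n + b)) / (n + b)) atTop (𝓝 0) := by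
    refine tendsto_of_tendsto_of_tendsto_of_le_of_le' tendsto_const_nhds
      ((tendsto_log_add_mul_div_atTop c ha).comp hm) ?_ ?_
    · filter_upwards [hm.eventually_ge_atTop a⁻¹] with n hn
      have : 1 ≤ a * (n + b) := by rwa [inv_le_iff_one_le_mul₀' ha] at hn
      have : 0 ≤ c * r ^ n := by positivity
      exact div_nonneg (log_nonneg (by linarith)) (by linarith [inv_pos.2 ha])
    · filter_upwards [hm.eventually_gt_atTop 0] with n hn
      have : c * r ^ n ≤ c := mul_le_of_le_one_right hc.le (pow_le_one₀ hr₀.le hr₁)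
      exact div_le_div_of_nonneg_right (log_le_log (by positivity) (by linarith)) hn.le
  have hconst : Tendsto (fun n : ℕ => log c / (n + b)) atTop (𝓝 0) :=
    tendsto_const_nhds.div_atTop hm
  have hratio : Tendsto (fun n : ℕ => (n : ℝ) / (n + b) * log r) atTop (𝓝 (log r)) := by
    simpa using (tendsto_natCast_div_add_atTop b).mul_const (log r)
  refine ((hnum.sub hconst).sub hratio |>.congr' ?_).trans (by simp)
  filter_upwards [hm.eventually_gt_atTop 0] with n hn
  have hpow : 0 < c * r ^ n := by positivity
  rw [one_add_div hpow.ne', log_div (by positivity) hpow.ne', log_mul hc.ne' (by positivity),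
    log_pow]
  ring

theorem tendsto_log_one_add_div_of_geometric_bounds {r a c₁ c₂ : ℝ} (b : ℝ) {g : ℕ → ℝ}
    (hr₀ : 0 < r) (hr₁ : r ≤ 1) (ha : 0 < a) (hc₁ : 0 < c₁) (hc₂ : 0 < c₂)
    (hlower : ∀ᶠ n in atTop, c₁ * r ^ n ≤ g n) (hupper : ∀ᶠ n in atTop, g n ≤ c₂ * r ^ n) :
    Tendsto (fun n : ℕ => log (1 + a * (n + b) / g n) / (n + b)) atTop (𝓝 (-log r)) := by
  have hm : Tendsto (fun n : ℕ => (n : ℝ) + b) atTop atTop :=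
    tendsto_atTop_add_const_right _ b tendsto_natCast_atTop_atTop
  refine tendsto_of_tendsto_of_tendsto_of_le_of_le'
    (tendsto_log_one_add_div_geometric b hr₀ hr₁ ha hc₂)
    (tendsto_log_one_add_div_geometric b hr₀ hr₁ ha hc₁) ?_ ?_
  all_goals
    filter_upwards [hlower, hupper, hm.eventually_gt_atTop 0] with n hlo hup hn
    have : 0 < g n := lt_of_lt_of_le (by positivity) hlo
    gcongr

def snrDenominator (β : ℝ) (K n : ℕ) : ℝ :=
  (∑ i ∈ Icc (n - K + 1) n, β ^ (2 * (i - 1)))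
    + ∑ i ∈ Icc 1 (n - K), β ^ (2 * (i - 1) + 4 * K * ((n - i) / K))

section SnrDenominator

variable {β : ℝ} {K n : ℕ}

theorem inv_mul_pow_le_snrDenominator (hβ : 0 < β) (hK : 1 ≤ K) (hn : 1 ≤ n) :
    (β ^ 2)⁻¹ * (β ^ 2) ^ n ≤ snrDenominator β K n := by
  have hlast : (β ^ 2)⁻¹ * (β ^ 2) ^ n = β ^ (2 * (n - 1)) := by
    rw [pow_mul, pow_sub₀ _ (by positivity) hn, pow_one, mul_comm]
  rw [hlast, snrDenominator]
  refine le_add_of_le_of_nonneg ?_ (sum_nonneg fun i _ => by positivity)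
  exact single_le_sum (f := fun i => β ^ (2 * (i - 1))) (fun i _ => by positivity)
    (mem_Icc.2 ⟨by omega, le_rfl⟩)

theorem sum_Icc_sub_add_one_pow_le (hβ₀ : 0 ≤ β) (hβ₁ : β ≤ 1) :
    ∑ i ∈ Icc (n - K + 1) n, β ^ (2 * (i - 1)) ≤ K * (β ^ 2) ^ (n - K) := by
  calc ∑ i ∈ Icc (n - K + 1) n, β ^ (2 * (i - 1))
      ≤ ∑ i ∈ Icc (n - K + 1) n, (β ^ 2) ^ (n - K) := by
        refine sum_le_sum fun i hi => ?_
        rw [← pow_mul]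
        exact pow_le_pow_of_le_one hβ₀ hβ₁ (by rw [mem_Icc] at hi; omega)
    _ ≤ K * (β ^ 2) ^ (n - K) := by
        rw [sum_const, Nat.card_Icc, nsmul_eq_mul]
        gcongr
        exact_mod_cast (by omega : n + 1 - (n - K + 1) ≤ K)

theorem sum_Icc_one_pow_le (hβ₀ : 0 ≤ β) (hβ₁ : β < 1) (hK : 1 ≤ K) :
    ∑ i ∈ Icc 1 (n - K), β ^ (2 * (i - 1) + 4 * K * ((n - i) / K))
      ≤ (β ^ 2) ^ (n - K) * (1 - β ^ 2)⁻¹ := by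
  have hexp : ∀ i ≤ n - K,
      2 * (n - K) + 2 * (n - K - i) ≤ 2 * (i - 1) + 4 * K * ((n - i) / K) := by
    intro i hi
    have hdiv := Nat.div_add_mod (n - i) K
    have hmod := Nat.mod_lt (n - i) hK
    rw [mul_assoc]
    generalize K * ((n - i) / K) = q at hdiv
    generalize (n - i) % K = s at hdiv hmod
    omega
  calc ∑ i ∈ Icc 1 (n - K), β ^ (2 * (i - 1) + 4 * K * ((n - i) / K))
      ≤ ∑ i ∈ Ico 1 (n - K + 1), (β ^ 2) ^ (n - K) * (β ^ 2) ^ (n - K - i) := by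
        refine sum_le_sum fun i hi => ?_
        rw [← pow_add, ← pow_mul, mul_add]
        exact pow_le_pow_of_le_one hβ₀ hβ₁.le (hexp i (mem_Icc.1 hi).2)
    _ = (β ^ 2) ^ (n - K) * ∑ j ∈ Ico 0 (n - K), (β ^ 2) ^ j := by
        rw [← mul_sum, sum_Ico_reflect _ _ le_rfl, Nat.add_sub_cancel, Nat.sub_self]
    _ ≤ (β ^ 2) ^ (n - K) * (1 - β ^ 2)⁻¹ := by
        gcongr
        simpa using geom_sum_Ico_le_of_lt_one (m := 0) (n := n - K) (sq_nonneg β)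
          (pow_lt_one₀ hβ₀ hβ₁ two_ne_zero)

theorem snrDenominator_le (hβ₀ : 0 < β) (hβ₁ : β < 1) (hK : 1 ≤ K) (hn : K ≤ n) :
    snrDenominator β K n ≤ (K + (1 - β ^ 2)⁻¹) / (β ^ 2) ^ K * (β ^ 2) ^ n := by
  calc snrDenominator β K n
      ≤ K * (β ^ 2) ^ (n - K) + (β ^ 2) ^ (n - K) * (1 - β ^ 2)⁻¹ :=
        add_le_add (sum_Icc_sub_add_one_pow_le hβ₀.le hβ₁.le) (sum_Icc_one_pow_le hβ₀.le hβ₁ hK)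
    _ = (K + (1 - β ^ 2)⁻¹) / (β ^ 2) ^ K * (β ^ 2) ^ n := by
        rw [pow_sub₀ _ (by positivity) hn]
        ring

end SnrDenominator

/-- the per-blocklength sum-rate of the linear feedback scheme for
the symmetric `K`-user AWGN-BC with noiseless feedback converges to
`−K·log₂ β`: with `g(n,β)` the SNR denominator,
`lim_{n→∞} [K/(2(n+K−1))]·log₂(1 + a(n+K−1)/g(n,β)) = −K·log₂ β`. -/
theorem stmt_7 (β : ℝ) (hβ : β ∈ Set.Ioo (0:ℝ) 1) (K : ℕ) (hK : 1 ≤ K)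
    (a : ℝ) (ha : 0 < a)
    (g : ℕ → ℝ)
    (hg : ∀ n, K < n → g n = (∑ i ∈ Finset.Icc (n - K + 1) n, β ^ (2 * (i - 1)))
      + ∑ i ∈ Finset.Icc 1 (n - K), β ^ (2 * (i - 1) + 4 * K * ((n - i) / K))) :
    Tendsto (fun n : ℕ =>
        ((K : ℝ) / (2 * ((n : ℝ) + K - 1))) *
          Real.logb 2 (1 + a * ((n : ℝ) + K - 1) / g n))
      atTop (nhds (-(K : ℝ) * Real.logb 2 β)) := by
  obtain ⟨hβ₀, hβ₁⟩ := hβ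
  have hβ2 : 0 < 1 - β ^ 2 := sub_pos.2 (pow_lt_one₀ hβ₀.le hβ₁ two_ne_zero)
  have hg' : ∀ᶠ n in atTop, g n = snrDenominator β K n := (eventually_gt_atTop K).mono hg
  have hlower : ∀ᶠ n in atTop, (β ^ 2)⁻¹ * (β ^ 2) ^ n ≤ g n := by
    filter_upwards [hg', eventually_gt_atTop K] with n hgn hn
    exact hgn ▸ inv_mul_pow_le_snrDenominator hβ₀ hK (by omega)
  have hupper : ∀ᶠ n in atTop, g n ≤ (K + (1 - β ^ 2)⁻¹) / (β ^ 2) ^ K * (β ^ 2) ^ n := by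
    filter_upwards [hg', eventually_gt_atTop K] with n hgn hn
    exact hgn ▸ snrDenominator_le hβ₀ hβ₁ hK hn.le
  have hrate := tendsto_log_one_add_div_of_geometric_bounds ((K : ℝ) - 1) (by positivity)
    (by linarith) ha (by positivity) (by positivity) hlower hupper
  convert hrate.const_mul ((K : ℝ) / (2 * log 2)) using 2 with n
  · simp only [logb, add_sub_assoc, div_eq_mul_inv, mul_inv]
    ring
  · rw [logb, log_pow]
    push_cast
    ring
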